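/- arXiv:2604.06130 — 3 statements merged into one kernel-verified Lean document; each statement's English description precedes it below -/
import Mathlib

section
/- Let d ≥ 1 and let U₀, U₁, U₂ be d×d complex matrices. Let P be a unitary 4×4 complex matrix satisfying P e₀ = (1/√3)(e₀ + e₁ + e₂), where e₀, …, e₃ is the standard basis of ℂ⁴. Define the select matrix S = Σ_{l=0}^{2} (e_l e_l*) ⊗ U_l + (e₃ e₃*) ⊗ I_d, a 4d×4d matrix built with the Kronecker product. Then for every φ ∈ ℂ^d, ((e₀ e₀*) ⊗ I_d) · (P* ⊗ I_d) · S · (P ⊗ I_d) · (e₀ ⊗ φ) = e₀ ⊗ (1/3)(U₀ + U₁ + U₂) φ. -/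
/-!
By the mixed-product rule the operator splits as `Σₗ (E₀ P* Eₗ P) ⊗ Uₗ + (E₀ P* E₃ P) ⊗ I`, and
`E₀ P* Eₗ P e₀ = |P l 0|² e₀`. The prescribed first column of `P` makes these weights `1/3` for
`l < 3` and `0` for `l = 3`.
-/

namespace Matrix

open Kronecker

theorem kronecker_mulVec_prod {R l m n p : Type*} [CommSemiring R] [Fintype m] [Fintype p]
    (A : Matrix l m R) (B : Matrix n p R) (x : m → R) (y : p → R) :
    (A ⊗ₖ B) *ᵥ (fun q => x q.1 * y q.2) = fun q => (A *ᵥ x) q.1 * (B *ᵥ y) q.2 := by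
  funext q
  simp only [mulVec, dotProduct, Fintype.sum_prod_type, kroneckerMap_apply, Finset.sum_mul,
    Finset.mul_sum]
  rw [Finset.sum_comm]
  exact Finset.sum_congr rfl fun i _ => Finset.sum_congr rfl fun j _ => by ring

theorem single_mul_conjTranspose_mul_single_mul_mulVec_single {R n : Type*}
    [CommSemiring R] [StarRing R] [Fintype n] [DecidableEq n] (P : Matrix n n R) (i l j : n) :
    (single i i 1 * Pᴴ * single l l 1 * P) *ᵥ Pi.single j 1 =
      Pi.single i (star (P l i) * P l j) := by
  rw [mulVec_single_one, single_mul_mul_single, one_mul, mul_one, conjTranspose_apply]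
  ext k
  rcases eq_or_ne k i with rfl | hk
  · simp [single_mul_apply_same]
  · simp [single_mul_apply_of_ne (h := hk), hk]

end Matrix

open Matrix Kronecker in
theorem stmt8_general (d : ℕ) (U₀ U₁ U₂ : Matrix (Fin d) (Fin d) ℂ)
    (P : Matrix (Fin 4) (Fin 4) ℂ)
    (hPe : P.mulVec (Pi.single 0 1) =
      (1 / (Real.sqrt 3 : ℂ)) •
        (Pi.single (0 : Fin 4) (1 : ℂ) + Pi.single 1 1 + Pi.single 2 1)) :
    let E : Fin 4 → Matrix (Fin 4) (Fin 4) ℂ := fun l => Matrix.single l l 1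
    let S : Matrix (Fin 4 × Fin d) (Fin 4 × Fin d) ℂ :=
      E 0 ⊗ₖ U₀ + E 1 ⊗ₖ U₁ + E 2 ⊗ₖ U₂ + E 3 ⊗ₖ (1 : Matrix (Fin d) (Fin d) ℂ)
    ∀ φ : Fin d → ℂ,
      ((E 0 ⊗ₖ (1 : Matrix (Fin d) (Fin d) ℂ)) *
          (Pᴴ ⊗ₖ (1 : Matrix (Fin d) (Fin d) ℂ)) * S *
          (P ⊗ₖ (1 : Matrix (Fin d) (Fin d) ℂ))).mulVec
        (fun p => (Pi.single (0 : Fin 4) (1 : ℂ) : Fin 4 → ℂ) p.1 * φ p.2) =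
      fun p => (Pi.single (0 : Fin 4) (1 : ℂ) : Fin 4 → ℂ) p.1 *
        ((1 / 3 : ℂ) • ((U₀ + U₁ + U₂).mulVec φ)) p.2 := by
  intro E S φ
  have hweight : ∀ l : Fin 4, star (P l 0) * P l 0 = if l = 3 then 0 else 1 / 3 := by
    have hsqrt : (Real.sqrt 3 : ℂ)⁻¹ * (Real.sqrt 3 : ℂ)⁻¹ = 3⁻¹ := by
      rw [← mul_inv, ← Complex.ofReal_mul, Real.mul_self_sqrt (by norm_num)]
      norm_num
    intro l
    have hl : P l 0 = (P *ᵥ Pi.single 0 1) l := by rw [mulVec_single_one, col_apply]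
    rw [hl, hPe]
    fin_cases l <;> simp [hsqrt]
  have hblock : ∀ l : Fin 4, (E 0 * Pᴴ * E l * P) *ᵥ Pi.single 0 1 =
      Pi.single 0 (if l = 3 then 0 else 1 / 3) := fun l => by
    rw [single_mul_conjTranspose_mul_single_mul_mulVec_single, hweight]
  have hsplit : (E 0 ⊗ₖ 1) * (Pᴴ ⊗ₖ 1) * S * (P ⊗ₖ 1) =
      (E 0 * Pᴴ * E 0 * P) ⊗ₖ U₀ + (E 0 * Pᴴ * E 1 * P) ⊗ₖ U₁ + (E 0 * Pᴴ * E 2 * P) ⊗ₖ U₂ +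
        (E 0 * Pᴴ * E 3 * P) ⊗ₖ (1 : Matrix (Fin d) (Fin d) ℂ) := by
    simp only [S, Matrix.mul_add, Matrix.add_mul, ← mul_kronecker_mul, Matrix.mul_one,
      Matrix.one_mul]
  rw [hsplit]
  simp only [add_mulVec, kronecker_mulVec_prod, hblock]
  funext p
  simp only [Fin.isValue, Fin.reduceEq, ↓reduceIte, one_div, Pi.single_apply, ite_mul, zero_mul,
    ite_self, one_mulVec, Pi.add_apply, add_zero, Pi.smul_apply, smul_eq_mul, one_mul]
  split_ifs <;> ring

open Matrix Kronecker in
/-- LCU block encoding: with a state-preparation unitary `P` mapping `e₀` to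
`(1/√3)(e₀+e₁+e₂)` and the select matrix `S = Σₗ (eₗeₗ*) ⊗ Uₗ + (e₃e₃*) ⊗ I`,
projecting the ancilla of `(P*⊗I) S (P⊗I) (e₀⊗φ)` onto `e₀` yields
`e₀ ⊗ (1/3)(U₀+U₁+U₂)φ`. -/
theorem stmt8 (d : ℕ) (hd : 1 ≤ d) (U₀ U₁ U₂ : Matrix (Fin d) (Fin d) ℂ)
    (P : Matrix (Fin 4) (Fin 4) ℂ) (hP : P ∈ Matrix.unitaryGroup (Fin 4) ℂ)
    (hPe : P.mulVec (Pi.single 0 1) =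
      (1 / (Real.sqrt 3 : ℂ)) •
        (Pi.single (0 : Fin 4) (1 : ℂ) + Pi.single 1 1 + Pi.single 2 1)) :
    let E : Fin 4 → Matrix (Fin 4) (Fin 4) ℂ := fun l => Matrix.single l l 1
    let S : Matrix (Fin 4 × Fin d) (Fin 4 × Fin d) ℂ :=
      E 0 ⊗ₖ U₀ + E 1 ⊗ₖ U₁ + E 2 ⊗ₖ U₂ + E 3 ⊗ₖ (1 : Matrix (Fin d) (Fin d) ℂ)
    ∀ φ : Fin d → ℂ,
      ((E 0 ⊗ₖ (1 : Matrix (Fin d) (Fin d) ℂ)) *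
          (Pᴴ ⊗ₖ (1 : Matrix (Fin d) (Fin d) ℂ)) * S *
          (P ⊗ₖ (1 : Matrix (Fin d) (Fin d) ℂ))).mulVec
        (fun p => (Pi.single (0 : Fin 4) (1 : ℂ) : Fin 4 → ℂ) p.1 * φ p.2) =
      fun p => (Pi.single (0 : Fin 4) (1 : ℂ) : Fin 4 → ℂ) p.1 *
        ((1 / 3 : ℂ) • ((U₀ + U₁ + U₂).mulVec φ)) p.2 :=
  stmt8_general d U₀ U₁ U₂ P hPe
end

section
/- Let κ₀, κ₁ : ℝ → ℝ be differentiable, let γ̄₀, γ̄₁ ∈ ℝ, and let w₀, w₁ : ℝ → ℝ be differentiable functions such that for each i ∈ {0, 1} the flux t ↦ κᵢ(t)(wᵢ'(t) + γ̄ᵢ) is constant on ℝ. Define v(x₀, x₁) = w₀(x₀) + w₁(x₁) and μ(x₀, x₁) = κ₀(x₀) κ₁(x₁). Then the two-dimensional equilibrium equation holds everywhere: ∂/∂x₀[ μ(x) (∂v/∂x₀ + γ̄₀) ] + ∂/∂x₁[ μ(x) (∂v/∂x₁ + γ̄₁) ] = 0, i.e. ∇·(μ(∇v + γ̄)) = 0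 for γ̄ = (γ̄₀, γ̄₁). -/
/-- Separable shear modulus: if the one-dimensional fluxes `κᵢ(wᵢ' + γ̄ᵢ)` are
constant, then `v(x) = w₀(x₀) + w₁(x₁)` with `μ(x) = κ₀(x₀)κ₁(x₁)` satisfies the
two-dimensional equilibrium equation `∇·(μ(∇v + γ̄)) = 0`. -/
theorem stmt14 (κ₀ κ₁ w₀ w₁ : ℝ → ℝ) (γ₀ γ₁ : ℝ)
    (hκ₀ : Differentiable ℝ κ₀) (hκ₁ : Differentiable ℝ κ₁)
    (hw₀ : Differentiable ℝ w₀) (hw₁ : Differentiable ℝ w₁)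
    (hflux₀ : ∃ c : ℝ, ∀ t : ℝ, κ₀ t * (deriv w₀ t + γ₀) = c)
    (hflux₁ : ∃ c : ℝ, ∀ t : ℝ, κ₁ t * (deriv w₁ t + γ₁) = c) :
    let v : ℝ × ℝ → ℝ := fun x => w₀ x.1 + w₁ x.2
    let μ : ℝ × ℝ → ℝ := fun x => κ₀ x.1 * κ₁ x.2
    ∀ x : ℝ × ℝ,
      deriv (fun s : ℝ => μ (s, x.2) * (deriv (fun t : ℝ => v (t, x.2)) s + γ₀)) x.1 +
        deriv (fun s : ℝ => μ (x.1, s) * (deriv (fun t : ℝ => v (x.1, t)) s + γ₁)) x.2 = 0 := by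
  intro v μ x
  obtain ⟨c₀, hc₀⟩ := hflux₀
  obtain ⟨c₁, hc₁⟩ := hflux₁
  have h₀ : (fun s : ℝ => μ (s, x.2) * (deriv (fun t : ℝ => v (t, x.2)) s + γ₀))
      = fun _ => c₀ * κ₁ x.2 := by
    funext s
    have : (fun t : ℝ => v (t, x.2)) = fun t => w₀ t + w₁ x.2 := rfl
    rw [this, deriv_add_const]
    simp only [μ]
    rw [show κ₀ s * κ₁ x.2 * (deriv w₀ s + γ₀)
        = κ₀ s * (deriv w₀ s + γ₀) * κ₁ x.2 by ring, hc₀]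
  have h₁ : (fun s : ℝ => μ (x.1, s) * (deriv (fun t : ℝ => v (x.1, t)) s + γ₁))
      = fun _ => κ₀ x.1 * c₁ := by
    funext s
    have : (fun t : ℝ => v (x.1, t)) = fun t => w₀ x.1 + w₁ t := rfl
    rw [this, deriv_const_add]
    simp only [μ]
    rw [show κ₀ x.1 * κ₁ s * (deriv w₁ s + γ₁)
        = κ₀ x.1 * (κ₁ s * (deriv w₁ s + γ₁)) by ring, hc₁]
  rw [h₀, h₁, deriv_const, deriv_const]
  ring
end

section
/- Define κ : ℝ → ℝ by κ(t) = 1/(3/4 + (7/12) sin²(πt)), the shear modulus μ(x₀, x₁) = κ(x₀) κ(x₁), and the strain field γ(x₀, x₁) = ( (25 − 7 cos(2πx₀))/2500 , (25 − 7 cos(2πx₁))/2500 ). Then the stress field σ = μ·γ satisfies the equilibrium equation ∂σ₀/∂x₀ + ∂σ₁/∂x₁ = 0 at every point of ℝ². Moreover κ(t)·(25 − 7 cos(2πt))/2500 = 24/2500 for all t ∈ ℝ. -/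
/-- Two-dimensional RVE with separable modulus `μ(x) = κ(x₀)κ(x₁)`,
`κ(t) = 1/(3/4 + (7/12) sin²(πt))`: the stress `σ = μγ` with
`γ(x) = ((25 − 7cos(2πx₀))/2500, (25 − 7cos(2πx₁))/2500)` is divergence-free,
and `κ(t)(25 − 7cos(2πt))/2500 = 24/2500` for all `t`. -/
theorem stmt15 :
    let κ : ℝ → ℝ := fun t => 1 / (3 / 4 + (7 / 12) * Real.sin (Real.pi * t) ^ 2)
    let μ : ℝ × ℝ → ℝ := fun x => κ x.1 * κ x.2
    let γ₀ : ℝ × ℝ → ℝ := fun x => (25 - 7 * Real.cos (2 * Real.pi * x.1)) / 2500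
    let γ₁ : ℝ × ℝ → ℝ := fun x => (25 - 7 * Real.cos (2 * Real.pi * x.2)) / 2500
    (∀ x : ℝ × ℝ,
      deriv (fun s : ℝ => μ (s, x.2) * γ₀ (s, x.2)) x.1 +
        deriv (fun s : ℝ => μ (x.1, s) * γ₁ (x.1, s)) x.2 = 0) ∧
    ∀ t : ℝ, κ t * ((25 - 7 * Real.cos (2 * Real.pi * t)) / 2500) = 24 / 2500 := by
  intro κ μ γ₀ γ₁
  have key : ∀ t : ℝ, κ t * ((25 - 7 * Real.cos (2 * Real.pi * t)) / 2500) = 24 / 2500 := by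
    intro t
    have hs : Real.sin (Real.pi * t) ^ 2 = 1 / 2 - Real.cos (2 * (Real.pi * t)) / 2 := by
      have h1 := Real.sin_sq (Real.pi * t)
      have h2 := Real.cos_two_mul (Real.pi * t)
      linarith
    have harg : 2 * (Real.pi * t) = 2 * Real.pi * t := by ring
    have hD : (3 / 4 + (7 / 12) * Real.sin (Real.pi * t) ^ 2)
        = (25 - 7 * Real.cos (2 * Real.pi * t)) / 24 := by
      rw [hs, harg]; ring
    have hc : -1 ≤ Real.cos (2 * Real.pi * t) := Real.neg_one_le_cos _
    have hc' : Real.cos (2 * Real.pi * t) ≤ 1 := Real.cos_le_one _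
    have hne : 25 - 7 * Real.cos (2 * Real.pi * t) ≠ 0 := by nlinarith
    show (1 / (3 / 4 + (7 / 12) * Real.sin (Real.pi * t) ^ 2)) *
        ((25 - 7 * Real.cos (2 * Real.pi * t)) / 2500) = 24 / 2500
    rw [hD]
    field_simp
  refine ⟨?_, key⟩
  intro x
  have h0 : (fun s : ℝ => μ (s, x.2) * γ₀ (s, x.2)) = fun _ => κ x.2 * (24 / 2500) := by
    funext s
    show κ s * κ x.2 * ((25 - 7 * Real.cos (2 * Real.pi * s)) / 2500) = _
    rw [mul_comm (κ s) (κ x.2), mul_assoc, key s]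
  have h1 : (fun s : ℝ => μ (x.1, s) * γ₁ (x.1, s)) = fun _ => κ x.1 * (24 / 2500) := by
    funext s
    show κ x.1 * κ s * ((25 - 7 * Real.cos (2 * Real.pi * s)) / 2500) = _
    rw [mul_assoc, key s]
  rw [h0, h1, deriv_const, deriv_const, add_zero]
end
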